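/- arXiv:1611.09925 — 2 statements merged into one kernel-verified Lean document; each statement's English description precedes it below -/
import Mathlib

section
/- Suppose the IV assumptions and positivity hold, δ^D ≠ 0, and there is no additive U–Z interaction in the treatment model, i.e. for every u ∈ 𝒰, E[D | Z=1, U=u] − E[D | Z=0, U=u] = δ^D. Then the Wald estimand identifies the average treatment effect: δ^Y / δ^D = E[Y1 − Y0]. -/
/-!
Within a stratum `U = u`, independence of each potential outcome from `(Z, D)` gives
`E[Y | Z = z, U = u] = E[Y1 | U = u] p_{z,u} + E[Y0 | U = u] (1 - p_{z,u})` with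
`p_{z,u} = E[D | Z = z, U = u]`. As `Z` is independent of `U`, averaging these with weights
`μ(U = u)` gives `E[Y | Z = z]`, so
`δ^Y = ∑ u, μ(U = u) (E[Y1 | U = u] - E[Y0 | U = u]) (p_{1,u} - p_{0,u})`.
Without `U`–`Z` interaction every `p_{1,u} - p_{0,u}` equals `δ^D`, and the sum is `δ^D E[Y1 - Y0]`.
-/

open MeasureTheory ProbabilityTheory

/-- Conditional mean of `W` given event `A`: `E[W | A] = (∫_A W dμ) / μ(A)`. -/
noncomputable def condMean {Ω : Type*} [MeasurableSpace Ω] (μ : Measure Ω)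
    (W : Ω → ℝ) (A : Set Ω) : ℝ :=
  (∫ ω in A, W ω ∂μ) / (μ A).toReal

section

variable {Ω : Type*} [MeasurableSpace Ω] {μ : Measure Ω}

lemma integral_cond_eq_condMean (W : Ω → ℝ) (A : Set Ω) :
    ∫ ω, W ω ∂μ[|A] = condMean μ W A := by
  rw [ProbabilityTheory.cond, integral_smul_measure, ENNReal.toReal_inv, smul_eq_mul, condMean,
    inv_mul_eq_div]

lemma setIntegral_eq_measureReal_mul_condMean [IsFiniteMeasure μ] (W : Ω → ℝ) (A : Set Ω) :
    ∫ ω in A, W ω ∂μ = μ.real A * condMean μ W A := by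
  rcases eq_or_ne (μ A) 0 with hA | hA
  · simp [Measure.restrict_eq_zero.mpr hA, measureReal_def, hA]
  · rw [condMean, ← measureReal_def, mul_div_cancel₀]
    exact (measureReal_ne_zero_iff).mpr hA

lemma setIntegral_mul_eq_condMean_mul_of_indepFun [IsFiniteMeasure μ] {X W : Ω → ℝ} {t : Set Ω}
    (hXW : IndepFun X W μ[|t]) (hX : AEStronglyMeasurable X μ) (hW : AEStronglyMeasurable W μ) :
    ∫ ω in t, W ω * X ω ∂μ = condMean μ X t * ∫ ω in t, W ω ∂μ := by
  rw [setIntegral_eq_measureReal_mul_condMean, setIntegral_eq_measureReal_mul_condMean W,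
    ← integral_cond_eq_condMean, ← integral_cond_eq_condMean, ← integral_cond_eq_condMean,
    hXW.symm.integral_fun_mul_eq_mul_integral (hW.mono_ac cond_absolutelyContinuous)
      (hX.mono_ac cond_absolutelyContinuous)]
  ring

variable {𝒰 : Type*} [Fintype 𝒰] [MeasurableSpace 𝒰] [MeasurableSingletonClass 𝒰]

lemma setIntegral_eq_sum_inter_fiber {U : Ω → 𝒰} (hU : Measurable U) {f : Ω → ℝ} {s : Set Ω}
    (hs : MeasurableSet s) (hf : IntegrableOn f s μ) :
    ∫ ω in s, f ω ∂μ = ∑ u, ∫ ω in s ∩ {ω | U ω = u}, f ω ∂μ := by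
  have hcover : s = ⋃ u, s ∩ {ω | U ω = u} := by ext ω; simp
  conv_lhs => rw [hcover]
  refine integral_iUnion_fintype (fun u => hs.inter (hU (measurableSet_singleton u))) ?_
    (fun u => hf.mono_set Set.inter_subset_left)
  intro u v huv
  exact Set.disjoint_left.mpr fun ω hu hv => huv (hu.2.symm.trans hv.2)

lemma integral_eq_sum_measureReal_mul_condMean [IsFiniteMeasure μ] {U : Ω → 𝒰}
    (hU : Measurable U) {f : Ω → ℝ} (hf : Integrable f μ) :
    ∫ ω, f ω ∂μ = ∑ u, μ.real {ω | U ω = u} * condMean μ f {ω | U ω = u} := by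
  rw [← setIntegral_univ, setIntegral_eq_sum_inter_fiber hU MeasurableSet.univ hf.integrableOn]
  simp_rw [Set.univ_inter, setIntegral_eq_measureReal_mul_condMean]

lemma condMean_eq_sum_measureReal_mul_condMean_inter [IsFiniteMeasure μ] {U : Ω → 𝒰}
    (hU : Measurable U) {f : Ω → ℝ} {s : Set Ω} (hs : MeasurableSet s) (hf : IntegrableOn f s μ)
    (hindep : ∀ u, μ (s ∩ {ω | U ω = u}) = μ s * μ {ω | U ω = u}) :
    condMean μ f s = ∑ u, μ.real {ω | U ω = u} * condMean μ f (s ∩ {ω | U ω = u}) := by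
  rcases eq_or_ne (μ s) 0 with hs0 | hs0
  · simp [condMean, hindep, hs0]
  have h := setIntegral_eq_sum_inter_fiber hU hs hf
  simp_rw [setIntegral_eq_measureReal_mul_condMean, measureReal_def, hindep, ENNReal.toReal_mul,
    mul_assoc, ← Finset.mul_sum, ← measureReal_def] at h
  exact mul_left_cancel₀ ((measureReal_ne_zero_iff).mpr hs0) h

lemma setIntegral_preimage_inter_mul_of_indepFun [IsFiniteMeasure μ] {β : Type*}
    [MeasurableSpace β] {X : Ω → ℝ} {V : Ω → β} {t : Set Ω} (hXV : IndepFun X V μ[|t])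
    (hX : AEStronglyMeasurable X μ) (hV : Measurable V) {B : Set β} (hB : MeasurableSet B)
    {g : β → ℝ} (hg : Measurable g) :
    ∫ ω in V ⁻¹' B ∩ t, g (V ω) * X ω ∂μ = condMean μ X t * ∫ ω in V ⁻¹' B ∩ t, g (V ω) ∂μ := by
  have hgB : Measurable (B.indicator g) := hg.indicator hB
  have hind : (V ⁻¹' B).indicator (fun ω => g (V ω)) = fun ω => B.indicator g (V ω) :=
    funext fun _ => Set.indicator_comp_right V
  simp_rw [← Measure.restrict_restrict (hV hB), ← integral_indicator (hV hB),
    Set.indicator_mul_left, hind]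
  exact setIntegral_mul_eq_condMean_mul_of_indepFun (hXV.comp measurable_id hgB) hX
    (hgB.comp hV).aestronglyMeasurable

lemma MeasureTheory.Integrable.mul_of_eq_zero_or_one {D X : Ω → ℝ} (hX : Integrable X μ)
    (hD : Measurable D) (hD01 : ∀ ω, D ω = 0 ∨ D ω = 1) : Integrable (fun ω => D ω * X ω) μ :=
  hX.bdd_mul (c := 1) hD.aestronglyMeasurable
    (ae_of_all _ fun ω => by rcases hD01 ω with h | h <;> simp [h])

lemma one_sub_eq_zero_or_one {d : ℝ} (hd : d = 0 ∨ d = 1) : 1 - d = 0 ∨ 1 - d = 1 := by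
  rcases hd with h | h <;> simp [h]

lemma condMean_inter_eq_of_indepFun [IsFiniteMeasure μ] {Z D Y1 Y0 Y : Ω → ℝ} {t : Set Ω}
    (hZ : Measurable Z) (hD : Measurable D) (hD01 : ∀ ω, D ω = 0 ∨ D ω = 1)
    (hY1 : Integrable Y1 μ) (hY0 : Integrable Y0 μ)
    (hY : ∀ ω, Y ω = D ω * Y1 ω + (1 - D ω) * Y0 ω)
    (h1 : IndepFun Y1 (fun ω => (Z ω, D ω)) μ[|t])
    (h0 : IndepFun Y0 (fun ω => (Z ω, D ω)) μ[|t])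
    {z : ℝ} (hst : μ ({ω | Z ω = z} ∩ t) ≠ 0) :
    condMean μ Y ({ω | Z ω = z} ∩ t) =
      condMean μ Y1 t * condMean μ D ({ω | Z ω = z} ∩ t)
        + condMean μ Y0 t * (1 - condMean μ D ({ω | Z ω = z} ∩ t)) := by
  set A := {ω | Z ω = z} ∩ t
  have hV : Measurable fun ω => (Z ω, D ω) := hZ.prodMk hD
  -- `A` is, definitionally, the preimage of `{p | p.1 = z}` under `(Z, D)` intersected with `t`.
  have hB : MeasurableSet {p : ℝ × ℝ | p.1 = z} := measurable_fst (measurableSet_singleton z)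
  have hY1D : ∫ ω in A, D ω * Y1 ω ∂μ = condMean μ Y1 t * ∫ ω in A, D ω ∂μ :=
    setIntegral_preimage_inter_mul_of_indepFun h1 hY1.aestronglyMeasurable hV hB measurable_snd
  have hY0D : ∫ ω in A, (1 - D ω) * Y0 ω ∂μ = condMean μ Y0 t * ∫ ω in A, (1 - D ω) ∂μ :=
    setIntegral_preimage_inter_mul_of_indepFun h0 hY0.aestronglyMeasurable hV hB
      (measurable_const.sub measurable_snd)
  have hint : ∫ ω in A, Y ω ∂μ
      = condMean μ Y1 t * ∫ ω in A, D ω ∂μ + condMean μ Y0 t * ∫ ω in A, (1 - D ω) ∂μ := by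
    simp_rw [hY, ← hY1D, ← hY0D]
    have h1D01 : ∀ ω, 1 - D ω = 0 ∨ 1 - D ω = 1 := fun ω => one_sub_eq_zero_or_one (hD01 ω)
    exact integral_add (hY1.mul_of_eq_zero_or_one hD hD01).integrableOn
      (hY0.mul_of_eq_zero_or_one (hD.const_sub 1) h1D01).integrableOn
  have h1D : ∫ ω in A, (1 - D ω) ∂μ = μ.real A - ∫ ω in A, D ω ∂μ := by
    have hDint : Integrable D μ := by
      simpa using (integrable_const (1 : ℝ)).mul_of_eq_zero_or_one hD hD01
    rw [integral_sub (integrable_const 1) hDint.integrableOn]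
    simp
  refine mul_left_cancel₀ ((measureReal_ne_zero_iff).mpr hst) ?_
  rw [← setIntegral_eq_measureReal_mul_condMean, hint, h1D,
    setIntegral_eq_measureReal_mul_condMean D]
  ring

end

theorem wald_identifies_ate_no_UZ_interaction_general
    {Ω : Type*} [MeasurableSpace Ω] (μ : Measure Ω) [IsProbabilityMeasure μ]
    {𝒰 : Type*} [Fintype 𝒰] [MeasurableSpace 𝒰] [MeasurableSingletonClass 𝒰]
    (Z D Y1 Y0 Y : Ω → ℝ) (U : Ω → 𝒰)
    (hZmeas : Measurable Z) (hDmeas : Measurable D) (hUmeas : Measurable U)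
    (hD01 : ∀ ω, D ω = 0 ∨ D ω = 1)
    (hY1int : Integrable Y1 μ) (hY0int : Integrable Y0 μ)
    (hYdef : ∀ ω, Y ω = D ω * Y1 ω + (1 - D ω) * Y0 ω)
    -- (A2) Z is independent of U
    (hA2 : ∀ (z : ℝ) (u : 𝒰),
      μ ({ω | Z ω = z} ∩ {ω | U ω = u}) = μ {ω | Z ω = z} * μ {ω | U ω = u})
    -- (A1′, A4) under μ(· | U = u), each potential outcome is independent of (Z, D)
    (hA14one : ∀ u : 𝒰, IndepFun Y1 (fun ω => (Z ω, D ω)) (μ[|{ω | U ω = u}]))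
    (hA14zero : ∀ u : 𝒰, IndepFun Y0 (fun ω => (Z ω, D ω)) (μ[|{ω | U ω = u}]))
    -- positivity
    (hPos : ∀ (z : ℝ), (z = 0 ∨ z = 1) → ∀ (u : 𝒰),
      0 < μ ({ω | Z ω = z} ∩ {ω | U ω = u}))
    -- δ^Y and δ^D
    (δY δD : ℝ)
    (hδY : δY = condMean μ Y {ω | Z ω = 1} - condMean μ Y {ω | Z ω = 0})
    (hδDne : δD ≠ 0)
    -- (A5.a) no additive U–Z interaction in the treatment model
    (hA5a : ∀ u : 𝒰,
      condMean μ D ({ω | Z ω = 1} ∩ {ω | U ω = u})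
        - condMean μ D ({ω | Z ω = 0} ∩ {ω | U ω = u}) = δD) :
    δY / δD = ∫ ω, (Y1 ω - Y0 ω) ∂μ := by
  have hYint : Integrable Y μ := by
    rw [funext hYdef]
    exact (hY1int.mul_of_eq_zero_or_one hDmeas hD01).add
      (hY0int.mul_of_eq_zero_or_one (hDmeas.const_sub 1) fun ω => one_sub_eq_zero_or_one (hD01 ω))
  have hY_given_Z : ∀ z : ℝ, z = 0 ∨ z = 1 →
      condMean μ Y {ω | Z ω = z} = ∑ u, μ.real {ω | U ω = u} *
        (condMean μ Y1 {ω | U ω = u} * condMean μ D ({ω | Z ω = z} ∩ {ω | U ω = u})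
          + condMean μ Y0 {ω | U ω = u} *
            (1 - condMean μ D ({ω | Z ω = z} ∩ {ω | U ω = u}))) := by
    intro z hz
    rw [condMean_eq_sum_measureReal_mul_condMean_inter (s := {ω | Z ω = z}) hUmeas
      (hZmeas (measurableSet_singleton z)) hYint.integrableOn (hA2 z)]
    refine Finset.sum_congr rfl fun u _ => ?_
    rw [condMean_inter_eq_of_indepFun hZmeas hDmeas hD01 hY1int hY0int hYdef (hA14one u)
      (hA14zero u) (hPos z hz u).ne']
  have hATE : ∫ ω, (Y1 ω - Y0 ω) ∂μ = ∑ u, μ.real {ω | U ω = u} *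
      (condMean μ Y1 {ω | U ω = u} - condMean μ Y0 {ω | U ω = u}) := by
    simp_rw [integral_sub hY1int hY0int, integral_eq_sum_measureReal_mul_condMean hUmeas hY1int,
      integral_eq_sum_measureReal_mul_condMean hUmeas hY0int, mul_sub, Finset.sum_sub_distrib]
  have hδY_eq : δY = δD * ∫ ω, (Y1 ω - Y0 ω) ∂μ := by
    rw [hδY, hY_given_Z 1 (by norm_num), hY_given_Z 0 (by norm_num), hATE,
      ← Finset.sum_sub_distrib, Finset.mul_sum]
    refine Finset.sum_congr rfl fun u _ => ?_
    rw [← hA5a u]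
    ring
  rw [hδY_eq, mul_div_cancel_left₀ _ hδDne]

/-- under the IV assumptions, positivity, `δ^D ≠ 0` and no additive
`U`–`Z` interaction in the treatment model (A5.a), the Wald estimand `δ^Y / δ^D`
identifies the average treatment effect `E[Y1 − Y0]`. -/
theorem wald_identifies_ate_no_UZ_interaction
    {Ω : Type*} [MeasurableSpace Ω] (μ : Measure Ω) [IsProbabilityMeasure μ]
    {𝒰 : Type*} [Fintype 𝒰] [MeasurableSpace 𝒰] [MeasurableSingletonClass 𝒰]
    (Z D Y1 Y0 Y : Ω → ℝ) (U : Ω → 𝒰)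
    (hZmeas : Measurable Z) (hDmeas : Measurable D) (hUmeas : Measurable U)
    (hZ01 : ∀ ω, Z ω = 0 ∨ Z ω = 1) (hD01 : ∀ ω, D ω = 0 ∨ D ω = 1)
    (hY1int : Integrable Y1 μ) (hY0int : Integrable Y0 μ)
    (hYdef : ∀ ω, Y ω = D ω * Y1 ω + (1 - D ω) * Y0 ω)
    (hUpos : ∀ u : 𝒰, 0 < μ {ω | U ω = u})
    -- (A2) Z is independent of U
    (hA2 : ∀ (z : ℝ) (u : 𝒰),
      μ ({ω | Z ω = z} ∩ {ω | U ω = u}) = μ {ω | Z ω = z} * μ {ω | U ω = u})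
    -- (A1′, A4) under μ(· | U = u), each potential outcome is independent of (Z, D)
    (hA14one : ∀ u : 𝒰, IndepFun Y1 (fun ω => (Z ω, D ω)) (μ[|{ω | U ω = u}]))
    (hA14zero : ∀ u : 𝒰, IndepFun Y0 (fun ω => (Z ω, D ω)) (μ[|{ω | U ω = u}]))
    -- positivity
    (hPos : ∀ (z : ℝ), (z = 0 ∨ z = 1) → ∀ (u : 𝒰),
      0 < μ ({ω | Z ω = z} ∩ {ω | U ω = u}))
    -- δ^Y and δ^D
    (δY δD : ℝ)
    (hδY : δY = condMean μ Y {ω | Z ω = 1} - condMean μ Y {ω | Z ω = 0})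
    (hδD : δD = condMean μ D {ω | Z ω = 1} - condMean μ D {ω | Z ω = 0})
    (hδDne : δD ≠ 0)
    -- (A5.a) no additive U–Z interaction in the treatment model
    (hA5a : ∀ u : 𝒰,
      condMean μ D ({ω | Z ω = 1} ∩ {ω | U ω = u})
        - condMean μ D ({ω | Z ω = 0} ∩ {ω | U ω = u}) = δD) :
    δY / δD = ∫ ω, (Y1 ω - Y0 ω) ∂μ :=
  wald_identifies_ate_no_UZ_interaction_general μ Z D Y1 Y0 Y U hZmeas hDmeas hUmeas hD01 hY1int
    hY0int hYdef hA2 hA14one hA14zero hPos δY δD hδY hδDne hA5a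
end

section
/- (Robustness in model M2.) Suppose δ^D(x) ≠ 0 for every x ∈ 𝒳, and let δ*, pY*, pD* : 𝒳 → ℝ be arbitrary functions (possibly misspecified). Then Φ(f, δ*, δ^D, pY*, pD*) = Δ, where f is the true conditional instrument density and δ^D is the true conditional treatment difference. -/
/-!
On a cell `{Z = z, X = x}` the integrand of `Φ` is an affine function of `(Y, D)`, so its
integral is the mass of the cell times the same affine function of the conditional means
`p_z^Y(x)`, `p_z^D(x)`. With the true propensity `f(z | x)` the weight `(2z - 1) / f(z | x)`
turns the cell mass into `± μ(X = x)`, so the constants `pY*(x)`, `pD*(x)` cancel between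
`z = 0` and `z = 1` and the stratum `X = x` contributes
`μ(X = x) ((δ^Y(x) - δ^D(x) δ*(x)) / δD*(x) + δ*(x))`. For `δD* = δ^D` this is
`μ(X = x) δ(x)`, whatever `δ*` is.
-/

open MeasureTheory

/-- The multiply robust functional
`Φ(f*, δ*, δD*, pY*, pD*) = E[ ((2Z−1)/f*(Z,X)) (1/δD*(X))
  (Y − pY*(X) − D δ*(X) + pD*(X) δ*(X)) + δ*(X) ]`. -/
noncomputable def mrFunctional {Ω 𝒳 : Type*} [MeasurableSpace Ω] (μ : Measure Ω)
    (Z D Y : Ω → ℝ) (X : Ω → 𝒳)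
    (fs : ℝ → 𝒳 → ℝ) (δs δDs pYs pDs : 𝒳 → ℝ) : ℝ :=
  ∫ ω, ((2 * Z ω - 1) / fs (Z ω) (X ω)) * (1 / δDs (X ω)) *
      (Y ω - pYs (X ω) - D ω * δs (X ω) + pDs (X ω) * δs (X ω)) + δs (X ω) ∂μ

section Integrals

variable {Ω : Type*} [MeasurableSpace Ω] {μ : Measure Ω}

theorem integral_eq_sum_setIntegral_fiber {α E : Type*} [Fintype α] [MeasurableSpace α]
    [MeasurableSingletonClass α] [NormedAddCommGroup E] [NormedSpace ℝ E] {V : Ω → α}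
    (hV : Measurable V) {g : Ω → E} (hg : ∀ a, IntegrableOn g (V ⁻¹' {a}) μ) :
    ∫ ω, g ω ∂μ = ∑ a, ∫ ω in V ⁻¹' {a}, g ω ∂μ := by
  rw [← integral_iUnion_fintype (fun a => hV (measurableSet_singleton a))
    (fun a b hab => Set.disjoint_singleton.2 hab |>.preimage V) hg, ← Set.preimage_iUnion,
    Set.iUnion_of_singleton, Set.preimage_univ, setIntegral_univ]

theorem setIntegral_eq_condMean_mul [IsFiniteMeasure μ] (W : Ω → ℝ) (A : Set Ω) :
    ∫ ω in A, W ω ∂μ = condMean μ W A * μ.real A := by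
  by_cases hA : μ A = 0
  · rw [setIntegral_measure_zero W hA, measureReal_def, hA, ENNReal.toReal_zero, mul_zero]
  · rw [condMean, ← measureReal_def, div_mul_cancel₀ _ ((measureReal_ne_zero_iff).2 hA)]

theorem setIntegral_affine_eq_condMean [IsFiniteMeasure μ] {Y D : Ω → ℝ} (hY : Integrable Y μ)
    (hD : Integrable D μ) (A : Set Ω) (a b c : ℝ) :
    ∫ ω in A, (a * Y ω + b * D ω + c) ∂μ =
      μ.real A * (a * condMean μ Y A + b * condMean μ D A + c) := by
  have hYA : IntegrableOn (fun ω => a * Y ω) A μ := (hY.const_mul a).integrableOn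
  have hDA : IntegrableOn (fun ω => b * D ω) A μ := (hD.const_mul b).integrableOn
  have hYDA : IntegrableOn (fun ω => a * Y ω + b * D ω) A μ := hYA.add hDA
  rw [integral_add hYDA (integrableOn_const (measure_ne_top μ A)), integral_add hYA hDA,
    integral_const_mul, integral_const_mul, setIntegral_const, setIntegral_eq_condMean_mul,
    setIntegral_eq_condMean_mul, smul_eq_mul]
  ring

theorem integrable_of_forall_eq_zero_or_eq_one [IsFiniteMeasure μ] {D : Ω → ℝ}
    (hD : Measurable D) (hD01 : ∀ ω, D ω = 0 ∨ D ω = 1) : Integrable D μ :=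
  (integrable_const (1 : ℝ)).mono' hD.aestronglyMeasurable <| .of_forall fun ω => by
    rcases hD01 ω with h | h <;> simp [h]

end Integrals

section BinarySplit

variable {Ω : Type*} {Z : Ω → ℝ}

theorem inter_union_inter_of_forall_eq_zero_or_eq_one (hZ01 : ∀ ω, Z ω = 0 ∨ Z ω = 1)
    (S : Set Ω) : ({ω | Z ω = 0} ∩ S) ∪ ({ω | Z ω = 1} ∩ S) = S := by
  rw [← Set.union_inter_distrib_right, Set.inter_eq_right]
  exact fun ω _ => hZ01 ω

theorem disjoint_inter_setOf_eq_zero_one (S : Set Ω) :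
    Disjoint ({ω | Z ω = 0} ∩ S) ({ω | Z ω = 1} ∩ S) :=
  Set.disjoint_left.2 fun _ h0 h1 => zero_ne_one (h0.1.symm.trans h1.1)

variable [MeasurableSpace Ω] {μ : Measure Ω} {S : Set Ω}

theorem measureReal_eq_add_of_forall_eq_zero_or_eq_one [IsFiniteMeasure μ] (hZ : Measurable Z)
    (hZ01 : ∀ ω, Z ω = 0 ∨ Z ω = 1) (hS : MeasurableSet S) :
    μ.real S = μ.real ({ω | Z ω = 0} ∩ S) + μ.real ({ω | Z ω = 1} ∩ S) := by
  rw [← measureReal_union (disjoint_inter_setOf_eq_zero_one S)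
    ((hZ (measurableSet_singleton 1)).inter hS), inter_union_inter_of_forall_eq_zero_or_eq_one hZ01]

theorem setIntegral_eq_add_of_forall_eq_zero_or_eq_one (hZ : Measurable Z)
    (hZ01 : ∀ ω, Z ω = 0 ∨ Z ω = 1) (hS : MeasurableSet S) {g : Ω → ℝ}
    (h0 : IntegrableOn g ({ω | Z ω = 0} ∩ S) μ) (h1 : IntegrableOn g ({ω | Z ω = 1} ∩ S) μ) :
    ∫ ω in S, g ω ∂μ = ∫ ω in {ω | Z ω = 0} ∩ S, g ω ∂μ + ∫ ω in {ω | Z ω = 1} ∩ S, g ω ∂μ := by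
  rw [← setIntegral_union (disjoint_inter_setOf_eq_zero_one S)
    ((hZ (measurableSet_singleton 1)).inter hS) h0 h1,
    inter_union_inter_of_forall_eq_zero_or_eq_one hZ01]

theorem integrableOn_of_forall_eq_zero_or_eq_one (hZ01 : ∀ ω, Z ω = 0 ∨ Z ω = 1) {g : Ω → ℝ}
    (h0 : IntegrableOn g ({ω | Z ω = 0} ∩ S) μ) (h1 : IntegrableOn g ({ω | Z ω = 1} ∩ S) μ) :
    IntegrableOn g S μ :=
  inter_union_inter_of_forall_eq_zero_or_eq_one hZ01 S ▸ h0.union h1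

end BinarySplit

section MultiplyRobust

variable {Ω 𝒳 : Type*} {Z D Y : Ω → ℝ} {X : Ω → 𝒳}

noncomputable def mrIntegrand (Z D Y : Ω → ℝ) (X : Ω → 𝒳) (fs : ℝ → 𝒳 → ℝ)
    (δs δDs pYs pDs : 𝒳 → ℝ) (ω : Ω) : ℝ :=
  ((2 * Z ω - 1) / fs (Z ω) (X ω)) * (1 / δDs (X ω)) *
    (Y ω - pYs (X ω) - D ω * δs (X ω) + pDs (X ω) * δs (X ω)) + δs (X ω)

theorem mrFunctional_eq_integral_mrIntegrand [MeasurableSpace Ω] {μ : Measure Ω}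
    (fs : ℝ → 𝒳 → ℝ) (δs δDs pYs pDs : 𝒳 → ℝ) :
    mrFunctional μ Z D Y X fs δs δDs pYs pDs =
      ∫ ω, mrIntegrand Z D Y X fs δs δDs pYs pDs ω ∂μ :=
  rfl

theorem mrIntegrand_eqOn_cell (fs : ℝ → 𝒳 → ℝ) (δs δDs pYs pDs : 𝒳 → ℝ) (z : ℝ) (x : 𝒳) :
    Set.EqOn (mrIntegrand Z D Y X fs δs δDs pYs pDs)
      (fun ω => (2 * z - 1) / fs z x / δDs x * Y ω + -((2 * z - 1) / fs z x / δDs x * δs x) * D ω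
        + ((2 * z - 1) / fs z x / δDs x * (pDs x * δs x - pYs x) + δs x))
      ({ω | Z ω = z} ∩ {ω | X ω = x}) := by
  rintro ω ⟨hz, hx⟩
  simp only [Set.mem_ofPred_eq] at hz hx
  simp only [mrIntegrand, hz, hx]
  ring

variable [MeasurableSpace Ω] {μ : Measure Ω} [IsFiniteMeasure μ] [MeasurableSpace 𝒳]
  [MeasurableSingletonClass 𝒳]

theorem measurableSet_cell (hZ : Measurable Z) (hX : Measurable X) (z : ℝ) (x : 𝒳) :
    MeasurableSet ({ω | Z ω = z} ∩ {ω | X ω = x}) :=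
  (hZ (measurableSet_singleton z)).inter (hX (measurableSet_singleton x))

theorem integrableOn_mrIntegrand_cell (hZ : Measurable Z) (hX : Measurable X)
    (hY : Integrable Y μ) (hD : Integrable D μ) (fs : ℝ → 𝒳 → ℝ) (δs δDs pYs pDs : 𝒳 → ℝ)
    (z : ℝ) (x : 𝒳) :
    IntegrableOn (mrIntegrand Z D Y X fs δs δDs pYs pDs) ({ω | Z ω = z} ∩ {ω | X ω = x}) μ :=
  (((hY.const_mul _).add (hD.const_mul _)).add (integrable_const _)).integrableOn.congr_fun
    (mrIntegrand_eqOn_cell fs δs δDs pYs pDs z x).symm (measurableSet_cell hZ hX z x)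

theorem setIntegral_mrIntegrand_cell (hZ : Measurable Z) (hX : Measurable X)
    (hY : Integrable Y μ) (hD : Integrable D μ) {fs : ℝ → 𝒳 → ℝ} {z : ℝ} {x : 𝒳}
    (hfs : fs z x = μ.real ({ω | Z ω = z} ∩ {ω | X ω = x}) / μ.real {ω | X ω = x})
    (hpos : μ ({ω | Z ω = z} ∩ {ω | X ω = x}) ≠ 0) (δs δDs pYs pDs : 𝒳 → ℝ) :
    ∫ ω in {ω | Z ω = z} ∩ {ω | X ω = x}, mrIntegrand Z D Y X fs δs δDs pYs pDs ω ∂μ =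
      (2 * z - 1) * μ.real {ω | X ω = x} / δDs x *
          (condMean μ Y ({ω | Z ω = z} ∩ {ω | X ω = x}) - pYs x
            - condMean μ D ({ω | Z ω = z} ∩ {ω | X ω = x}) * δs x + pDs x * δs x)
        + δs x * μ.real ({ω | Z ω = z} ∩ {ω | X ω = x}) := by
  set A := {ω | Z ω = z} ∩ {ω | X ω = x}
  have hA : μ.real A ≠ 0 := (measureReal_ne_zero_iff).2 hpos
  have hXx : μ.real {ω | X ω = x} ≠ 0 :=
    (measureReal_ne_zero_iff).2 fun h => hpos (measure_mono_null Set.inter_subset_right h)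
  have hf : fs z x ≠ 0 := hfs ▸ div_ne_zero hA hXx
  rw [setIntegral_congr_fun (measurableSet_cell hZ hX z x)
    (mrIntegrand_eqOn_cell fs δs δDs pYs pDs z x), setIntegral_affine_eq_condMean hY hD]
  field_simp [hf]
  rw [hfs]
  field_simp [hXx]
  ring

theorem setIntegral_mrIntegrand_fiber (hZ : Measurable Z) (hX : Measurable X)
    (hZ01 : ∀ ω, Z ω = 0 ∨ Z ω = 1) (hY : Integrable Y μ) (hD : Integrable D μ)
    {fs : ℝ → 𝒳 → ℝ}
    (hfs : ∀ z x, fs z x = μ.real ({ω | Z ω = z} ∩ {ω | X ω = x}) / μ.real {ω | X ω = x})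
    {x : 𝒳} (hpos0 : μ ({ω | Z ω = 0} ∩ {ω | X ω = x}) ≠ 0)
    (hpos1 : μ ({ω | Z ω = 1} ∩ {ω | X ω = x}) ≠ 0) (δs δDs pYs pDs : 𝒳 → ℝ) :
    ∫ ω in {ω | X ω = x}, mrIntegrand Z D Y X fs δs δDs pYs pDs ω ∂μ =
      μ.real {ω | X ω = x} *
        ((condMean μ Y ({ω | Z ω = 1} ∩ {ω | X ω = x})
            - condMean μ Y ({ω | Z ω = 0} ∩ {ω | X ω = x})
          - (condMean μ D ({ω | Z ω = 1} ∩ {ω | X ω = x})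
            - condMean μ D ({ω | Z ω = 0} ∩ {ω | X ω = x})) * δs x) / δDs x + δs x) := by
  have hXx : MeasurableSet {ω | X ω = x} := hX (measurableSet_singleton x)
  rw [setIntegral_eq_add_of_forall_eq_zero_or_eq_one hZ hZ01 hXx
      (integrableOn_mrIntegrand_cell hZ hX hY hD fs δs δDs pYs pDs 0 x)
      (integrableOn_mrIntegrand_cell hZ hX hY hD fs δs δDs pYs pDs 1 x),
    setIntegral_mrIntegrand_cell hZ hX hY hD (hfs 0 x) hpos0,
    setIntegral_mrIntegrand_cell hZ hX hY hD (hfs 1 x) hpos1,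
    measureReal_eq_add_of_forall_eq_zero_or_eq_one hZ hZ01 hXx]
  ring

theorem mrFunctional_eq_sum_of_propensity [Fintype 𝒳] (hZ : Measurable Z) (hX : Measurable X)
    (hZ01 : ∀ ω, Z ω = 0 ∨ Z ω = 1) (hY : Integrable Y μ) (hD : Integrable D μ)
    {fs : ℝ → 𝒳 → ℝ}
    (hfs : ∀ z x, fs z x = μ.real ({ω | Z ω = z} ∩ {ω | X ω = x}) / μ.real {ω | X ω = x})
    (hpos : ∀ z : ℝ, (z = 0 ∨ z = 1) → ∀ x, μ ({ω | Z ω = z} ∩ {ω | X ω = x}) ≠ 0)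
    (δs δDs pYs pDs : 𝒳 → ℝ) :
    mrFunctional μ Z D Y X fs δs δDs pYs pDs = ∑ x, μ.real {ω | X ω = x} *
        ((condMean μ Y ({ω | Z ω = 1} ∩ {ω | X ω = x})
            - condMean μ Y ({ω | Z ω = 0} ∩ {ω | X ω = x})
          - (condMean μ D ({ω | Z ω = 1} ∩ {ω | X ω = x})
            - condMean μ D ({ω | Z ω = 0} ∩ {ω | X ω = x})) * δs x) / δDs x + δs x) := by
  rw [mrFunctional_eq_integral_mrIntegrand, integral_eq_sum_setIntegral_fiber hX fun x =>
    integrableOn_of_forall_eq_zero_or_eq_one hZ01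
      (integrableOn_mrIntegrand_cell hZ hX hY hD fs δs δDs pYs pDs 0 x)
      (integrableOn_mrIntegrand_cell hZ hX hY hD fs δs δDs pYs pDs 1 x)]
  exact Finset.sum_congr rfl fun x _ => setIntegral_mrIntegrand_fiber hZ hX hZ01 hY hD hfs
    (hpos 0 (.inl rfl) x) (hpos 1 (.inr rfl) x) δs δDs pYs pDs

end MultiplyRobust

theorem mr_robust_M2_general
    {Ω : Type*} [MeasurableSpace Ω] (μ : Measure Ω) [IsProbabilityMeasure μ]
    {𝒳 : Type*} [Fintype 𝒳] [MeasurableSpace 𝒳] [MeasurableSingletonClass 𝒳]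
    (Z D Y : Ω → ℝ) (X : Ω → 𝒳)
    (hZmeas : Measurable Z) (hDmeas : Measurable D) (hXmeas : Measurable X)
    (hZ01 : ∀ ω, Z ω = 0 ∨ Z ω = 1) (hD01 : ∀ ω, D ω = 0 ∨ D ω = 1)
    (hYint : Integrable Y μ)
    -- positivity
    (hPos : ∀ (z : ℝ), (z = 0 ∨ z = 1) → ∀ (x : 𝒳),
      0 < μ ({ω | Z ω = z} ∩ {ω | X ω = x}))
    -- f(z | x) = μ(Z = z | X = x)
    (f : ℝ → 𝒳 → ℝ)
    (hf : ∀ (z : ℝ) (x : 𝒳),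
      f z x = (μ ({ω | Z ω = z} ∩ {ω | X ω = x})).toReal / (μ {ω | X ω = x}).toReal)
    -- p_z^Y, p_z^D, δ^Y, δ^D, and the conditional Wald estimand δ
    (pY pD : ℝ → 𝒳 → ℝ)
    (hpY : ∀ (z : ℝ) (x : 𝒳),
      pY z x = condMean μ Y ({ω | Z ω = z} ∩ {ω | X ω = x}))
    (hpD : ∀ (z : ℝ) (x : 𝒳),
      pD z x = condMean μ D ({ω | Z ω = z} ∩ {ω | X ω = x}))
    (δY δD δ : 𝒳 → ℝ)
    (hδY : ∀ x, δY x = pY 1 x - pY 0 x)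
    (hδD : ∀ x, δD x = pD 1 x - pD 0 x)
    (hδDne : ∀ x, δD x ≠ 0)
    (hδ : ∀ x, δ x = δY x / δD x)
    -- the average Wald estimand
    (Δ : ℝ) (hΔ : Δ = ∑ x : 𝒳, (μ {ω | X ω = x}).toReal * δ x)
    -- arbitrary candidate nuisance functions
    (δs pYs pDs : 𝒳 → ℝ) :
    mrFunctional μ Z D Y X f δs δD pYs pDs = Δ := by
  rw [mrFunctional_eq_sum_of_propensity hZmeas hXmeas hZ01 hYint
    (integrable_of_forall_eq_zero_or_eq_one hDmeas hD01) hf (fun z hz x => (hPos z hz x).ne'), hΔ]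
  refine Finset.sum_congr rfl fun x _ => ?_
  rw [← hpY, ← hpY, ← hpD, ← hpD, ← hδY, ← hδD, hδ, measureReal_def]
  field_simp [hδDne x]
  ring

/-- robustness in model `M2`: with the true instrument density `f`
and the true conditional treatment difference `δ^D`, but arbitrary (possibly
misspecified) `δ*, pY*, pD*`, the multiply robust functional recovers the average
Wald estimand: `Φ(f, δ*, δ^D, pY*, pD*) = Δ`. -/
theorem mr_robust_M2
    {Ω : Type*} [MeasurableSpace Ω] (μ : Measure Ω) [IsProbabilityMeasure μ]
    {𝒳 : Type*} [Fintype 𝒳] [MeasurableSpace 𝒳] [MeasurableSingletonClass 𝒳]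
    (Z D Y : Ω → ℝ) (X : Ω → 𝒳)
    (hZmeas : Measurable Z) (hDmeas : Measurable D) (hXmeas : Measurable X)
    (hYmeas : Measurable Y)
    (hZ01 : ∀ ω, Z ω = 0 ∨ Z ω = 1) (hD01 : ∀ ω, D ω = 0 ∨ D ω = 1)
    (hYint : Integrable Y μ)
    -- positivity
    (hPos : ∀ (z : ℝ), (z = 0 ∨ z = 1) → ∀ (x : 𝒳),
      0 < μ ({ω | Z ω = z} ∩ {ω | X ω = x}))
    -- f(z | x) = μ(Z = z | X = x)
    (f : ℝ → 𝒳 → ℝ)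
    (hf : ∀ (z : ℝ) (x : 𝒳),
      f z x = (μ ({ω | Z ω = z} ∩ {ω | X ω = x})).toReal / (μ {ω | X ω = x}).toReal)
    -- p_z^Y, p_z^D, δ^Y, δ^D, and the conditional Wald estimand δ
    (pY pD : ℝ → 𝒳 → ℝ)
    (hpY : ∀ (z : ℝ) (x : 𝒳),
      pY z x = condMean μ Y ({ω | Z ω = z} ∩ {ω | X ω = x}))
    (hpD : ∀ (z : ℝ) (x : 𝒳),
      pD z x = condMean μ D ({ω | Z ω = z} ∩ {ω | X ω = x}))
    (δY δD δ : 𝒳 → ℝ)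
    (hδY : ∀ x, δY x = pY 1 x - pY 0 x)
    (hδD : ∀ x, δD x = pD 1 x - pD 0 x)
    (hδDne : ∀ x, δD x ≠ 0)
    (hδ : ∀ x, δ x = δY x / δD x)
    -- the average Wald estimand
    (Δ : ℝ) (hΔ : Δ = ∑ x : 𝒳, (μ {ω | X ω = x}).toReal * δ x)
    -- arbitrary candidate nuisance functions
    (δs pYs pDs : 𝒳 → ℝ) :
    mrFunctional μ Z D Y X f δs δD pYs pDs = Δ :=
  mr_robust_M2_general μ Z D Y X hZmeas hDmeas hXmeas hZ01 hD01 hYint hPos f hf pY pD hpY hpD δY δD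
    δ hδY hδD hδDne hδ Δ hΔ δs pYs pDs
end
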